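/- If (A, Δ) is a right Zinbiel coalgebra, i.e. (id ⊗ Δ)∘Δ = (Δ ⊗ id)∘Δ + ((τ∘Δ) ⊗ id)∘Δ, then (id ⊗ Δ)∘Δ = (τ ⊗ id)∘(id ⊗ Δ)∘Δ, where τ is the flip on A ⊗ A. -/
import Mathlib


open TensorProduct

variable {K A : Type*} [Field K] [AddCommGroup A] [Module K A]

/-- The exchange (flip) map τ on A ⊗ A. -/
noncomputable def flipMap (K A : Type*) [Field K] [AddCommGroup A] [Module K A] :
    A ⊗[K] A →ₗ[K] A ⊗[K] A :=
  (TensorProduct.comm K A A).toLinearMap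

/-- (id ⊗ Δ) ∘ Δ, valued in A ⊗ (A ⊗ A). -/
noncomputable def idTensorDelta (Δ : A →ₗ[K] A ⊗[K] A) :
    A →ₗ[K] A ⊗[K] (A ⊗[K] A) :=
  (TensorProduct.map LinearMap.id Δ) ∘ₗ Δ

/-- (Δ' ⊗ id) ∘ Δ, transported to A ⊗ (A ⊗ A) via the associator. -/
noncomputable def deltaTensorId (Δ' Δ : A →ₗ[K] A ⊗[K] A) :
    A →ₗ[K] A ⊗[K] (A ⊗[K] A) :=
  (TensorProduct.assoc K A A A).toLinearMap ∘ₗ (TensorProduct.map Δ' LinearMap.id) ∘ₗ Δ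

/-- The map swapping the first two tensor factors of A ⊗ (A ⊗ A), i.e. τ ⊗ id. -/
noncomputable def swap12 (K A : Type*) [Field K] [AddCommGroup A] [Module K A] :
    A ⊗[K] (A ⊗[K] A) →ₗ[K] A ⊗[K] (A ⊗[K] A) :=
  (TensorProduct.assoc K A A A).toLinearMap ∘ₗ
    (TensorProduct.map (flipMap K A) LinearMap.id) ∘ₗ
      (TensorProduct.assoc K A A A).symm.toLinearMap

/-- The map swapping the last two tensor factors of A ⊗ (A ⊗ A), i.e. id ⊗ τ. -/
noncomputable def swap23 (K A : Type*) [Field K] [AddCommGroup A] [Module K A] :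
    A ⊗[K] (A ⊗[K] A) →ₗ[K] A ⊗[K] (A ⊗[K] A) :=
  TensorProduct.map LinearMap.id (flipMap K A)

/-- Right Zinbiel coalgebra: (id ⊗ Δ)∘Δ = (Δ ⊗ id)∘Δ + ((τ∘Δ) ⊗ id)∘Δ. -/
noncomputable def IsRightZinbielCoalgebra (Δ : A →ₗ[K] A ⊗[K] A) : Prop :=
  idTensorDelta Δ = deltaTensorId Δ Δ + deltaTensorId (flipMap K A ∘ₗ Δ) Δ

/-- Left Zinbiel coalgebra: (Δ ⊗ id)∘Δ = (id ⊗ Δ)∘Δ + (id ⊗ (τ∘Δ))∘Δ. -/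
noncomputable def IsLeftZinbielCoalgebra (Δ : A →ₗ[K] A ⊗[K] A) : Prop :=
  deltaTensorId Δ Δ =
    idTensorDelta Δ + (TensorProduct.map LinearMap.id (flipMap K A ∘ₗ Δ)) ∘ₗ Δ

/-- In a right Zinbiel coalgebra,
(id ⊗ Δ)∘Δ = (τ ⊗ id)∘(id ⊗ Δ)∘Δ. -/
theorem right_zinbiel_coalgebra_swap12
    {K A : Type*} [Field K] [AddCommGroup A] [Module K A]
    (Δ : A →ₗ[K] A ⊗[K] A) (h : IsRightZinbielCoalgebra Δ) :
    idTensorDelta Δ = swap12 K A ∘ₗ idTensorDelta Δ := by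
  have key : ∀ Δ' : A →ₗ[K] A ⊗[K] A,
      swap12 K A ∘ₗ deltaTensorId Δ' Δ = deltaTensorId (flipMap K A ∘ₗ Δ') Δ := by
    intro Δ'
    have : swap12 K A ∘ₗ ((TensorProduct.assoc K A A A).toLinearMap ∘ₗ
        TensorProduct.map Δ' LinearMap.id) =
        (TensorProduct.assoc K A A A).toLinearMap ∘ₗ
          TensorProduct.map (flipMap K A ∘ₗ Δ') LinearMap.id := by
      ext x y
      simp [swap12, flipMap]
    unfold deltaTensorId
    simp only [← LinearMap.comp_assoc] at this ⊢
    rw [this]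
  rw [h]
  rw [LinearMap.comp_add, key, key]
  have hf : flipMap K A ∘ₗ flipMap K A = LinearMap.id := by
    apply TensorProduct.ext'
    intro x y; simp [flipMap]
  have : flipMap K A ∘ₗ flipMap K A ∘ₗ Δ = Δ := by
    rw [← LinearMap.comp_assoc, hf, LinearMap.id_comp]
  rw [this, add_comm]
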